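/- Let ≿ be the Choquet expected utility preference on 𝓕 represented by f ↦ ∫ u(f) dπ (Choquet integral), where u : X → ℝ is nonconstant affine with 0 in the interior of u(X) and π is a capacity on (S, Σ). Then a nonempty, convex, weak*-compact set P ⊆ Δ belongs to 𝒫* if and only if for every finite chain ∅ = A₀ ⊂ A₁ ⊂ ⋯ ⊂ A_n = S in Σ, the set P ∩ {p ∈ Δ : p(A_i) ≤ π(A_i) for all 1 ≤ i ≤ n} is nonempty; and a nonempty, convex, weak*-compact set Q ⊆ Δ belongs to 𝒬* if and only if for every finite chain ∅ = A₀ ⊂ A₁ ⊂ ⋯ ⊂ A_n = S in Σ, the set Q ∩ {q ∈ Δ : q(A_i) ≥ π(A_i) for all 1 ≤ i ≤ n} is nonempty. -/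

import Mathlib

open scoped Pointwise
open MeasureTheory

namespace Paper

variable {S V : Type*}

/-- An algebra of subsets of `S` (the events `Σ`). -/
structure IsSetAlg (𝓐 : Set (Set S)) : Prop where
  empty_mem : ∅ ∈ 𝓐
  compl_mem : ∀ A ∈ 𝓐, Aᶜ ∈ 𝓐
  union_mem : ∀ A ∈ 𝓐, ∀ B ∈ 𝓐, A ∪ B ∈ 𝓐

/-- `B₀(Σ)`: real-valued `Σ`-measurable simple functions. -/
def IsSimpleFn (𝓐 : Set (Set S)) (φ : S → ℝ) : Prop :=
  (Set.range φ).Finite ∧ ∀ t : ℝ, φ ⁻¹' {t} ∈ 𝓐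

open Classical in
/-- The integral of a simple function with respect to a finitely additive set function. -/
noncomputable def fint (p : Set S → ℝ) (φ : S → ℝ) : ℝ :=
  if h : (Set.range φ).Finite then ∑ t ∈ h.toFinset, t * p (φ ⁻¹' {t}) else 0

/-- `Δ`: the finitely additive probabilities on `Σ` (canonically extended by `0` off `Σ`). -/
def Δset (𝓐 : Set (Set S)) : Set (Set S → ℝ) :=
  {p | p Set.univ = 1 ∧ (∀ A ∈ 𝓐, 0 ≤ p A) ∧
    (∀ A ∈ 𝓐, ∀ B ∈ 𝓐, Disjoint A B → p (A ∪ B) = p A + p B) ∧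
    ∀ A : Set S, A ∉ 𝓐 → p A = 0}

/-- The weak* topology `σ(Δ, B₀(Σ))`, i.e. the topology induced by the evaluation maps
`p ↦ ∫ φ dp`, `φ ∈ B₀(Σ)`. -/
noncomputable def weakStar (𝓐 : Set (Set S)) : TopologicalSpace (Set S → ℝ) :=
  TopologicalSpace.induced
    (fun p => fun φ : {φ : S → ℝ // IsSimpleFn 𝓐 φ} => fint p φ.1)
    Pi.topologicalSpace

/-- `𝒞`: the weak*-lower semicontinuous convex functions `c : Δ → (-∞, ∞]`. -/
def Cscr (𝓐 : Set (Set S)) : Set ((Set S → ℝ) → EReal) :=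
  {c | (∀ p ∈ Δset 𝓐, ⊥ < c p) ∧
    (@LowerSemicontinuousOn (Set S → ℝ) EReal (weakStar 𝓐) _ c (Δset 𝓐)) ∧
    ∀ p ∈ Δset 𝓐, ∀ q ∈ Δset 𝓐, ∀ a b : ℝ, 0 ≤ a → 0 ≤ b → a + b = 1 →
      c (a • p + b • q) ≤ (a : EReal) * c p + (b : EReal) * c q}

/-- A subset `C ⊆ 𝒞` is grounded if `sup_{c ∈ C} min_{p ∈ Δ} c p = 0`. -/
def Grounded (𝓐 : Set (Set S)) (C : Set ((Set S → ℝ) → EReal)) : Prop :=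
  (⨆ c ∈ C, ⨅ p ∈ Δset 𝓐, c p) = 0

/-- `min_{p ∈ Δ} (∫ φ dp + c p)`. -/
noncomputable def minVal (𝓐 : Set (Set S)) (c : (Set S → ℝ) → EReal) (φ : S → ℝ) : EReal :=
  ⨅ p ∈ Δset 𝓐, ((fint p φ : EReal) + c p)

/-- `max_{q ∈ Δ} (∫ φ dq - b q)`. -/
noncomputable def maxVal (𝓐 : Set (Set S)) (b : (Set S → ℝ) → EReal) (φ : S → ℝ) : EReal :=
  ⨆ q ∈ Δset 𝓐, ((fint q φ : EReal) - b q)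

/-- `max_{c ∈ C} min_{p ∈ Δ} (∫ φ dp + c p)`. -/
noncomputable def maxminVal (𝓐 : Set (Set S)) (C : Set ((Set S → ℝ) → EReal))
    (φ : S → ℝ) : EReal :=
  ⨆ c ∈ C, minVal 𝓐 c φ

/-- `min_{b ∈ B} max_{q ∈ Δ} (∫ φ dq - b q)`. -/
noncomputable def minmaxVal (𝓐 : Set (Set S)) (B : Set ((Set S → ℝ) → EReal))
    (φ : S → ℝ) : EReal :=
  ⨅ b ∈ B, maxVal 𝓐 b φ

/-- `min_{p ∈ P} ∫ φ dp`. -/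
noncomputable def minPVal (P : Set (Set S → ℝ)) (φ : S → ℝ) : EReal :=
  ⨅ p ∈ P, (fint p φ : EReal)

/-- `max_{q ∈ Q} ∫ φ dq`. -/
noncomputable def maxQVal (Q : Set (Set S → ℝ)) (φ : S → ℝ) : EReal :=
  ⨆ q ∈ Q, (fint q φ : EReal)

/-- `max_{P ∈ Pfam} min_{p ∈ P} ∫ φ dp`. -/
noncomputable def maxminPVal (Pfam : Set (Set (Set S → ℝ))) (φ : S → ℝ) : EReal :=
  ⨆ P ∈ Pfam, minPVal P φ

/-- `min_{Q ∈ Qfam} max_{q ∈ Q} ∫ φ dq`. -/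
noncomputable def minmaxQVal (Qfam : Set (Set (Set S → ℝ))) (φ : S → ℝ) : EReal :=
  ⨅ Q ∈ Qfam, maxQVal Q φ

open Classical in
/-- The convex-analytic indicator `δ_P` of a set `P`. -/
noncomputable def ind (P : Set (Set S → ℝ)) : (Set S → ℝ) → EReal :=
  fun p => if p ∈ P then (0 : EReal) else ⊤

variable [AddCommGroup V] [Module ℝ V]

/-- `𝓕`: the simple acts, i.e. `Σ`-measurable maps `f : S → X` with finitely many values. -/
def Acts (𝓐 : Set (Set S)) (X : Set V) : Set (S → V) :=
  {f | (∀ s, f s ∈ X) ∧ (Set.range f).Finite ∧ ∀ v : V, f ⁻¹' {v} ∈ 𝓐}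

/-- The constant act with value `x`. -/
def constAct (x : V) : S → V := fun _ : S => x

/-- The mixture `α f + (1 - α) g` of two acts, defined statewise. -/
def mix (α : ℝ) (f g : S → V) : S → V := fun s => α • f s + (1 - α) • g s

/-- The statewise utility `u ∘ f` of an act. -/
def uAct (u : V → ℝ) (f : S → V) : S → ℝ := fun s => u (f s)

/-- `u : X → ℝ` is nonconstant and affine on `X`. -/
def IsNonconstAffine (X : Set V) (u : V → ℝ) : Prop :=
  (∀ x ∈ X, ∀ y ∈ X, ∀ t ∈ Set.Icc (0 : ℝ) 1,
      u (t • x + (1 - t) • y) = t * u x + (1 - t) * u y) ∧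
  ∃ x ∈ X, ∃ y ∈ X, u x ≠ u y

/-- A niveloidal preference: Axioms A1 (weak order), A2 (monotonicity), A3 (Archimedean)
and A4 (weak C-independence). -/
structure NiveloidalPref (𝓐 : Set (Set S)) (X : Set V)
    (R : (S → V) → (S → V) → Prop) : Prop where
  nontrivial : ∃ f ∈ Acts 𝓐 X, ∃ g ∈ Acts 𝓐 X, R f g ∧ ¬ R g f
  complete : ∀ f ∈ Acts 𝓐 X, ∀ g ∈ Acts 𝓐 X, R f g ∨ R g f
  transitive : ∀ f ∈ Acts 𝓐 X, ∀ g ∈ Acts 𝓐 X, ∀ h ∈ Acts 𝓐 X, R f g → R g h → R f h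
  monotone : ∀ f ∈ Acts 𝓐 X, ∀ g ∈ Acts 𝓐 X,
    (∀ s : S, R (constAct (f s)) (constAct (g s))) → R f g
  archimedean : ∀ f ∈ Acts 𝓐 X, ∀ g ∈ Acts 𝓐 X, ∀ h ∈ Acts 𝓐 X,
    (R f g ∧ ¬ R g f) → (R g h ∧ ¬ R h g) →
    ∃ α ∈ Set.Ioo (0 : ℝ) 1, ∃ β ∈ Set.Ioo (0 : ℝ) 1,
      (R (mix α f h) g ∧ ¬ R g (mix α f h)) ∧
      (R g (mix β f h) ∧ ¬ R (mix β f h) g)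
  weakCIndep : ∀ f ∈ Acts 𝓐 X, ∀ g ∈ Acts 𝓐 X, ∀ x ∈ X, ∀ y ∈ X,
    ∀ α ∈ Set.Ioo (0 : ℝ) 1,
    R (mix α f (constAct x)) (mix α g (constAct x)) →
    R (mix α f (constAct y)) (mix α g (constAct y))

/-- An invariant biseparable preference: Axioms A1 (weak order), A2 (monotonicity),
A3 (Archimedean) and A7 (C-independence). -/
structure IBPref (𝓐 : Set (Set S)) (X : Set V)
    (R : (S → V) → (S → V) → Prop) : Prop where
  nontrivial : ∃ f ∈ Acts 𝓐 X, ∃ g ∈ Acts 𝓐 X, R f g ∧ ¬ R g f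
  complete : ∀ f ∈ Acts 𝓐 X, ∀ g ∈ Acts 𝓐 X, R f g ∨ R g f
  transitive : ∀ f ∈ Acts 𝓐 X, ∀ g ∈ Acts 𝓐 X, ∀ h ∈ Acts 𝓐 X, R f g → R g h → R f h
  monotone : ∀ f ∈ Acts 𝓐 X, ∀ g ∈ Acts 𝓐 X,
    (∀ s : S, R (constAct (f s)) (constAct (g s))) → R f g
  archimedean : ∀ f ∈ Acts 𝓐 X, ∀ g ∈ Acts 𝓐 X, ∀ h ∈ Acts 𝓐 X,
    (R f g ∧ ¬ R g f) → (R g h ∧ ¬ R h g) →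
    ∃ α ∈ Set.Ioo (0 : ℝ) 1, ∃ β ∈ Set.Ioo (0 : ℝ) 1,
      (R (mix α f h) g ∧ ¬ R g (mix α f h)) ∧
      (R g (mix β f h) ∧ ¬ R (mix β f h) g)
  cIndep : ∀ f ∈ Acts 𝓐 X, ∀ g ∈ Acts 𝓐 X, ∀ x ∈ X, ∀ α ∈ Set.Ioo (0 : ℝ) 1,
    (R f g ↔ R (mix α f (constAct x)) (mix α g (constAct x)))

/-- Axiom A5 (uncertainty aversion). -/
def UncertaintyAverse (𝓐 : Set (Set S)) (X : Set V)
    (R : (S → V) → (S → V) → Prop) : Prop :=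
  ∀ f ∈ Acts 𝓐 X, ∀ g ∈ Acts 𝓐 X, ∀ α ∈ Set.Ioo (0 : ℝ) 1,
    R f g → R g f → R (mix α f g) f

/-- `xf` assigns to every act a certainty equivalent. -/
def IsCE (𝓐 : Set (Set S)) (X : Set V) (R : (S → V) → (S → V) → Prop)
    (xf : (S → V) → V) : Prop :=
  ∀ f ∈ Acts 𝓐 X, xf f ∈ X ∧ R f (constAct (xf f)) ∧ R (constAct (xf f)) f

/-- `C*`: the maximal candidate set of penalty functions. -/
def CstarOf (𝓐 : Set (Set S)) (X : Set V) (u : V → ℝ) (xf : (S → V) → V) :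
    Set ((Set S → ℝ) → EReal) :=
  {c | c ∈ Cscr 𝓐 ∧ ∀ f ∈ Acts 𝓐 X, minVal 𝓐 c (uAct u f) ≤ (u (xf f) : EReal)}

/-- `B*`: the maximal candidate set of reward functions. -/
def BstarOf (𝓐 : Set (Set S)) (X : Set V) (u : V → ℝ) (xf : (S → V) → V) :
    Set ((Set S → ℝ) → EReal) :=
  {b | b ∈ Cscr 𝓐 ∧ ∀ f ∈ Acts 𝓐 X, (u (xf f) : EReal) ≤ maxVal 𝓐 b (uAct u f)}

/-- `Pfam*`: the maximal family of prior sets (maxmin form). -/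
def PstarOf (𝓐 : Set (Set S)) (X : Set V) (u : V → ℝ) (xf : (S → V) → V) :
    Set (Set (Set S → ℝ)) :=
  {P | P ⊆ Δset 𝓐 ∧ P.Nonempty ∧ Convex ℝ P ∧ (@IsCompact _ (weakStar 𝓐) P) ∧
    ∀ f ∈ Acts 𝓐 X, minPVal P (uAct u f) ≤ (u (xf f) : EReal)}

/-- `Qfam*`: the maximal family of prior sets (minmax form). -/
def QstarOf (𝓐 : Set (Set S)) (X : Set V) (u : V → ℝ) (xf : (S → V) → V) :
    Set (Set (Set S → ℝ)) :=
  {Q | Q ⊆ Δset 𝓐 ∧ Q.Nonempty ∧ Convex ℝ Q ∧ (@IsCompact _ (weakStar 𝓐) Q) ∧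
    ∀ f ∈ Acts 𝓐 X, (u (xf f) : EReal) ≤ maxQVal Q (uAct u f)}

/-- `C` yields the maxmin representation of `R` with utility `u`. -/
def MaxminRep (𝓐 : Set (Set S)) (X : Set V) (R : (S → V) → (S → V) → Prop)
    (u : V → ℝ) (C : Set ((Set S → ℝ) → EReal)) : Prop :=
  ∀ f ∈ Acts 𝓐 X, ∀ g ∈ Acts 𝓐 X,
    (R f g ↔ maxminVal 𝓐 C (uAct u g) ≤ maxminVal 𝓐 C (uAct u f))

/-- All indicated maxima over `C` and minima over `Δ` are attained. -/
def MaxminAttained (𝓐 : Set (Set S)) (X : Set V) (u : V → ℝ)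
    (C : Set ((Set S → ℝ) → EReal)) : Prop :=
  ∀ f ∈ Acts 𝓐 X,
    (∀ c ∈ C, ∃ p ∈ Δset 𝓐,
      minVal 𝓐 c (uAct u f) = (fint p (uAct u f) : EReal) + c p) ∧
    ∃ c ∈ C, maxminVal 𝓐 C (uAct u f) = minVal 𝓐 c (uAct u f)

/-- `B` yields the minmax representation of `R` with utility `u`. -/
def MinmaxRep (𝓐 : Set (Set S)) (X : Set V) (R : (S → V) → (S → V) → Prop)
    (u : V → ℝ) (B : Set ((Set S → ℝ) → EReal)) : Prop :=
  ∀ f ∈ Acts 𝓐 X, ∀ g ∈ Acts 𝓐 X,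
    (R f g ↔ minmaxVal 𝓐 B (uAct u g) ≤ minmaxVal 𝓐 B (uAct u f))

/-- All indicated minima over `B` and maxima over `Δ` are attained. -/
def MinmaxAttained (𝓐 : Set (Set S)) (X : Set V) (u : V → ℝ)
    (B : Set ((Set S → ℝ) → EReal)) : Prop :=
  ∀ f ∈ Acts 𝓐 X,
    (∀ b ∈ B, ∃ q ∈ Δset 𝓐,
      maxVal 𝓐 b (uAct u f) = (fint q (uAct u f) : EReal) - b q) ∧
    ∃ b ∈ B, minmaxVal 𝓐 B (uAct u f) = maxVal 𝓐 b (uAct u f)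

/-- A family of nonempty, convex, weak*-compact subsets of `Δ`. -/
def IsPriorFamily (𝓐 : Set (Set S)) (Pfam : Set (Set (Set S → ℝ))) : Prop :=
  Pfam.Nonempty ∧ ∀ P ∈ Pfam,
    P ⊆ Δset 𝓐 ∧ P.Nonempty ∧ Convex ℝ P ∧ (@IsCompact _ (weakStar 𝓐) P)

/-- `Pfam` yields the maxmin representation of `R` with utility `u`. -/
def PRep (𝓐 : Set (Set S)) (X : Set V) (R : (S → V) → (S → V) → Prop)
    (u : V → ℝ) (Pfam : Set (Set (Set S → ℝ))) : Prop :=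
  ∀ f ∈ Acts 𝓐 X, ∀ g ∈ Acts 𝓐 X,
    (R f g ↔ maxminPVal Pfam (uAct u g) ≤ maxminPVal Pfam (uAct u f))

/-- All indicated maxima over `Pfam` and minima over `P` are attained. -/
def PAttained (𝓐 : Set (Set S)) (X : Set V) (u : V → ℝ)
    (Pfam : Set (Set (Set S → ℝ))) : Prop :=
  ∀ f ∈ Acts 𝓐 X,
    (∀ P ∈ Pfam, ∃ p ∈ P, minPVal P (uAct u f) = (fint p (uAct u f) : EReal)) ∧
    ∃ P ∈ Pfam, maxminPVal Pfam (uAct u f) = minPVal P (uAct u f)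

/-- `Qfam` yields the minmax representation of `R` with utility `u`. -/
def QRep (𝓐 : Set (Set S)) (X : Set V) (R : (S → V) → (S → V) → Prop)
    (u : V → ℝ) (Qfam : Set (Set (Set S → ℝ))) : Prop :=
  ∀ f ∈ Acts 𝓐 X, ∀ g ∈ Acts 𝓐 X,
    (R f g ↔ minmaxQVal Qfam (uAct u g) ≤ minmaxQVal Qfam (uAct u f))

/-- All indicated minima over `Qfam` and maxima over `Q` are attained. -/
def QAttained (𝓐 : Set (Set S)) (X : Set V) (u : V → ℝ)
    (Qfam : Set (Set (Set S → ℝ))) : Prop :=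
  ∀ f ∈ Acts 𝓐 X,
    (∀ Q ∈ Qfam, ∃ q ∈ Q, maxQVal Q (uAct u f) = (fint q (uAct u f) : EReal)) ∧
    ∃ Q ∈ Qfam, minmaxQVal Qfam (uAct u f) = maxQVal Q (uAct u f)

/-- `c₁ ≈_u c₂`: `c₁` and `c₂` induce the same variational functional on `B₀(Σ, u(X))`. -/
def ApproxEq (𝓐 : Set (Set S)) (X : Set V) (u : V → ℝ)
    (c₁ c₂ : (Set S → ℝ) → EReal) : Prop :=
  ∀ φ : S → ℝ, IsSimpleFn 𝓐 φ → (∀ s, φ s ∈ u '' X) →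
    minVal 𝓐 c₁ φ = minVal 𝓐 c₂ φ

/-- `R₁` is more ambiguity averse than `R₂`. -/
def MoreAmbiguityAverse (𝓐 : Set (Set S)) (X : Set V)
    (R₁ R₂ : (S → V) → (S → V) → Prop) : Prop :=
  ∀ f ∈ Acts 𝓐 X, ∀ x ∈ X, R₂ (constAct x) f → R₁ (constAct x) f

/-- `u₁` and `u₂` are positive affine transformations of each other on `X`. -/
def CardEquiv (X : Set V) (u₁ u₂ : V → ℝ) : Prop :=
  ∃ a b : ℝ, 0 < a ∧ ∀ x ∈ X, u₂ x = a * u₁ x + b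

/-- A capacity on `(S, Σ)`. -/
def IsCapacity (𝓐 : Set (Set S)) (π : Set S → ℝ) : Prop :=
  π ∅ = 0 ∧ π Set.univ = 1 ∧ ∀ A ∈ 𝓐, ∀ B ∈ 𝓐, A ⊆ B → π A ≤ π B

/-- The Choquet integral of a (simple) function against a capacity. -/
noncomputable def choquet (π : Set S → ℝ) (φ : S → ℝ) : ℝ :=
  (∫ t in Set.Ioi (0 : ℝ), π {s | t ≤ φ s}) +
    ∫ t in Set.Iio (0 : ℝ), (π {s | t ≤ φ s} - 1)

/-!
Let `φ` be a simple function with values `t₁ > ⋯ > t_m` and upper level sets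
`∅ = A₀ ⊂ A_i = {φ ≥ t_i}`. For `ν = π`, and for `ν = p` finitely additive (the integral against
`p` is its own Choquet integral), the layer-cake formula gives
`∫ φ dν = ∑ t_i (ν(A_i) - ν(A_{i-1})) = t_m + ∑_{i<m} (t_i - t_{i+1}) ν(A_i)`.
So a prior `p ∈ P` lying below `π` on the chain of `u ∘ f` gives `∫ u(f) dp ≤ ∫ u(f) dπ = u(x_f)`.

Conversely, if no prior of `P` lies below `π` on a chain `(A_i)`, Hahn–Banach separates the
compact convex set `{(p(A_i))_i : p ∈ P}` from the orthant below `(π(A_i))_i` by nonnegative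
weights `μ`. The act whose utility is the comonotone sum `c ∑ μ_i 1_{A_i}`, with `c > 0` small
enough for its values to lie in `u(X)`, then has `∫ u(f) dp > u(x_f)` for every `p ∈ P`.
The case of `𝒬*` is symmetric.
-/

section Choquet

open Set

lemma integrable_indicator_one_restrict {s U : Set ℝ} (hs : MeasurableSet s)
    (hfin : volume (s ∩ U) ≠ ⊤) : Integrable (s.indicator (1 : ℝ → ℝ)) (volume.restrict U) :=
  (integrableOn_const (by rwa [Measure.restrict_apply hs])).integrable_indicator hs

lemma integral_Ioi_indicator_Iic (t : ℝ) :
    ∫ τ in Ioi 0, (Iic t).indicator 1 τ = max t 0 := by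
  rw [integral_indicator_one measurableSet_Iic, measureReal_restrict_apply measurableSet_Iic,
    Iic_inter_Ioi, Real.volume_real_Ioc, sub_zero]

lemma integral_Iio_indicator_Ioi (t : ℝ) :
    ∫ τ in Iio 0, (Ioi t).indicator 1 τ = max (-t) 0 := by
  rw [integral_indicator_one measurableSet_Ioi, measureReal_restrict_apply measurableSet_Ioi,
    Ioi_inter_Iio, Real.volume_real_Ioo, zero_sub]

theorem choquet_eq_sum_of_setOf_le {ι : Type*} {π : Set S → ℝ} {φ : S → ℝ} (I : Finset ι)
    (w t : ι → ℝ) (hw : ∑ i ∈ I, w i = 1)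
    (hlevel : ∀ τ, π {s | τ ≤ φ s} = ∑ i ∈ I with τ ≤ t i, w i) :
    choquet π φ = ∑ i ∈ I, w i * t i := by
  have hpos : ∀ τ, π {s | τ ≤ φ s} = ∑ i ∈ I, w i * (Iic (t i)).indicator 1 τ := by
    intro τ
    rw [hlevel, Finset.sum_filter]
    refine Finset.sum_congr rfl fun i _ => ?_
    by_cases h : τ ≤ t i <;> simp [h]
  have hneg : ∀ τ, π {s | τ ≤ φ s} - 1 = -∑ i ∈ I, w i * (Ioi (t i)).indicator 1 τ := by
    intro τ
    rw [hlevel, ← hw, Finset.sum_filter, ← neg_sub, ← Finset.sum_sub_distrib]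
    congr 1
    refine Finset.sum_congr rfl fun i _ => ?_
    by_cases h : τ ≤ t i <;> simp [indicator_apply, h]
  have hfin : ∀ a b : ℝ, volume (Ioc a b) ≠ ⊤ ∧ volume (Ioo a b) ≠ ⊤ :=
    fun a b => ⟨measure_Ioc_lt_top.ne, measure_Ioo_lt_top.ne⟩
  unfold choquet
  simp_rw [hneg, hpos]
  rw [integral_finsetSum _ fun i _ => (integrable_indicator_one_restrict measurableSet_Iic
      (by rw [Iic_inter_Ioi]; exact (hfin _ _).1)).const_mul (w i),
    integral_neg, integral_finsetSum _ fun i _ => (integrable_indicator_one_restrict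
      measurableSet_Ioi (by rw [Ioi_inter_Iio]; exact (hfin _ _).2)).const_mul (w i),
    ← sub_eq_add_neg, ← Finset.sum_sub_distrib]
  refine Finset.sum_congr rfl fun i _ => ?_
  rw [integral_const_mul, integral_const_mul, integral_Ioi_indicator_Iic,
    integral_Iio_indicator_Ioi, ← mul_sub, max_zero_sub_max_neg_zero_eq_self]

end Choquet

section Additivity

variable {𝓐 : Set (Set S)}

lemma IsSetAlg.univ_mem (hA : IsSetAlg 𝓐) : Set.univ ∈ 𝓐 := by
  simpa using hA.compl_mem ∅ hA.empty_mem

lemma IsSetAlg.diff_mem (hA : IsSetAlg 𝓐) {A B : Set S} (ha : A ∈ 𝓐) (hb : B ∈ 𝓐) :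
    A \ B ∈ 𝓐 := by
  have := hA.compl_mem _ (hA.union_mem _ (hA.compl_mem _ ha) _ hb)
  rwa [Set.compl_union, compl_compl, ← Set.sdiff_eq] at this

lemma IsSetAlg.biUnion_mem {ι : Type*} (hA : IsSetAlg 𝓐) (F : Finset ι) {B : ι → Set S}
    (hB : ∀ i ∈ F, B i ∈ 𝓐) : (⋃ i ∈ F, B i) ∈ 𝓐 := by
  classical
  induction F using Finset.induction with
  | empty => simpa using hA.empty_mem
  | insert a F _ ih =>
    rw [Finset.set_biUnion_insert]
    exact hA.union_mem _ (hB a (F.mem_insert_self a)) _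
      (ih fun i hi => hB i (Finset.mem_insert_of_mem hi))

lemma IsSetAlg.preimage_comp_mem (hA : IsSetAlg 𝓐) {β γ : Type*} {f : S → β}
    (hfin : (Set.range f).Finite) (hf : ∀ b, f ⁻¹' {b} ∈ 𝓐) (g : β → γ) (c : γ) :
    (g ∘ f) ⁻¹' {c} ∈ 𝓐 := by
  classical
  have h : (g ∘ f) ⁻¹' {c} = ⋃ b ∈ hfin.toFinset.filter (g · = c), f ⁻¹' {b} := by
    ext s; simp
  rw [h]
  exact hA.biUnion_mem _ fun b _ => hf b

lemma IsSimpleFn.setOf_le_mem (hA : IsSetAlg 𝓐) {φ : S → ℝ} (hφ : IsSimpleFn 𝓐 φ) (τ : ℝ) :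
    {s | τ ≤ φ s} ∈ 𝓐 := by
  have h : {s | τ ≤ φ s} = ⋃ r ∈ hφ.1.toFinset.filter (τ ≤ ·), φ ⁻¹' {r} := by
    ext s; simp
  rw [h]
  exact hA.biUnion_mem _ fun r _ => hφ.2 r

lemma Δset.apply_empty (hA : IsSetAlg 𝓐) {p : Set S → ℝ} (hp : p ∈ Δset 𝓐) : p ∅ = 0 := by
  have := hp.2.2.1 ∅ hA.empty_mem ∅ hA.empty_mem (Set.disjoint_empty _)
  rw [Set.union_empty] at this
  linarith

lemma Δset.apply_biUnion {ι : Type*} (hA : IsSetAlg 𝓐) {p : Set S → ℝ} (hp : p ∈ Δset 𝓐)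
    (F : Finset ι) {B : ι → Set S} (hB : ∀ i ∈ F, B i ∈ 𝓐)
    (hdisj : (F : Set ι).PairwiseDisjoint B) : p (⋃ i ∈ F, B i) = ∑ i ∈ F, p (B i) := by
  classical
  induction F using Finset.induction with
  | empty => simpa using Δset.apply_empty hA hp
  | insert a F ha ih =>
    have hB' : ∀ i ∈ F, B i ∈ 𝓐 := fun i hi => hB i (Finset.mem_insert_of_mem hi)
    rw [Finset.set_biUnion_insert, Finset.sum_insert ha,
      hp.2.2.1 _ (hB a (F.mem_insert_self a)) _ (hA.biUnion_mem F hB'),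
      ih hB' (hdisj.subset (by simp))]
    refine Set.disjoint_iUnion₂_right.2 fun i hi => hdisj (by simp) (by simp [hi]) ?_
    rintro rfl
    exact ha hi

lemma Δset.apply_preimage (hA : IsSetAlg 𝓐) {p : Set S → ℝ} (hp : p ∈ Δset 𝓐) {φ : S → ℝ}
    (hφ : IsSimpleFn 𝓐 φ) (F : Finset ℝ) : p (φ ⁻¹' F) = ∑ r ∈ F, p (φ ⁻¹' {r}) := by
  rw [← Set.biUnion_preimage_singleton]
  exact Δset.apply_biUnion hA hp F (fun r _ => hφ.2 r)
    fun r _ r' _ hne => Set.disjoint_left.2 fun s h h' => hne (h.symm.trans h')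

theorem fint_eq_choquet (hA : IsSetAlg 𝓐) {p : Set S → ℝ} (hp : p ∈ Δset 𝓐) {φ : S → ℝ}
    (hφ : IsSimpleFn 𝓐 φ) : fint p φ = choquet p φ := by
  classical
  rw [choquet_eq_sum_of_setOf_le hφ.1.toFinset (fun r => p (φ ⁻¹' {r})) id, fint, dif_pos hφ.1]
  · exact Finset.sum_congr rfl fun r _ => mul_comm _ _
  · rw [← Δset.apply_preimage hA hp hφ]
    convert hp.1
    ext s; simp
  · intro τ
    rw [← Δset.apply_preimage hA hp hφ]
    congr 1
    ext s; simp

end Additivity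

lemma sum_Icc_sub_mul_eq (ν t : ℕ → ℝ) (n : ℕ) :
    ∑ k ∈ Finset.Icc 1 n, (ν k - ν (k - 1)) * t k
      = t (n + 1) * ν n - t 1 * ν 0 + ∑ k ∈ Finset.Icc 1 n, (t k - t (k + 1)) * ν k := by
  induction n with
  | zero => simp
  | succ n ih =>
    rw [Finset.sum_Icc_succ_top (by omega), Finset.sum_Icc_succ_top (by omega), ih,
      Nat.add_sub_cancel]
    ring

lemma sum_Icc_sub_eq (ν : ℕ → ℝ) (n : ℕ) :
    ∑ k ∈ Finset.Icc 1 n, (ν k - ν (k - 1)) = ν n - ν 0 := by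
  simpa using sum_Icc_sub_mul_eq ν (fun _ => 1) n

lemma sum_Icc_sub_mul_le {a b t : ℕ → ℝ} {m : ℕ} (ht : AntitoneOn t (Set.Icc 1 m))
    (h0 : a 0 = b 0) (hm : a m = b m) (hab : ∀ k ∈ Finset.Icc 1 m, a k ≤ b k) :
    ∑ k ∈ Finset.Icc 1 m, (a k - a (k - 1)) * t k
      ≤ ∑ k ∈ Finset.Icc 1 m, (b k - b (k - 1)) * t k := by
  rw [sum_Icc_sub_mul_eq, sum_Icc_sub_mul_eq, h0, hm, add_le_add_iff_left]
  refine Finset.sum_le_sum fun k hk => ?_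
  obtain ⟨hk1, hkm⟩ := Finset.mem_Icc.1 hk
  rcases hkm.eq_or_lt with rfl | hkm
  · rw [hm]
  · exact mul_le_mul_of_nonneg_left (hab k hk) (sub_nonneg.2 <|
      ht ⟨hk1, hkm.le⟩ ⟨by omega, hkm⟩ (Nat.le_succ k))

lemma exists_strictAntiOn_image_Icc_eq (R : Finset ℝ) :
    ∃ t : ℕ → ℝ, StrictAntiOn t (Set.Icc 1 R.card) ∧ t '' Set.Icc 1 R.card = R := by
  set e := R.orderEmbOfFin rfl
  refine ⟨fun i => if h : i - 1 < R.card then e (Fin.rev ⟨i - 1, h⟩) else 0, ?_, ?_⟩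
  · intro i hi j hj hij
    simp only [Set.mem_Icc] at hi hj
    dsimp only
    rw [dif_pos (by omega), dif_pos (by omega)]
    exact e.strictMono (Fin.rev_lt_rev.2 (by simp only [Fin.mk_lt_mk]; omega))
  · ext r
    constructor
    · rintro ⟨i, hi, rfl⟩
      dsimp only
      rw [dif_pos (by simp only [Set.mem_Icc] at hi; omega)]
      exact R.orderEmbOfFin_mem rfl _
    · intro hr
      obtain ⟨x, rfl⟩ : r ∈ Set.range e := by rwa [Finset.range_orderEmbOfFin]
      have hx := (Fin.rev x).isLt
      refine ⟨(Fin.rev x : ℕ) + 1, ⟨by omega, by omega⟩, ?_⟩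
      simp only [Nat.add_sub_cancel, dif_pos hx, Fin.eta, Fin.rev_rev]

section Chain

variable {𝓐 : Set (Set S)}

/-- `∅ = A 0 ⊆ A 1 ⊆ ⋯ ⊆ A m = S`; monotonicity is required on all of `ℕ`, so the chain is
constant `S` from `m` on. -/
structure IsFiniteChain (m : ℕ) (A : ℕ → Set S) : Prop where
  mono : Monotone A
  zero : A 0 = ∅
  top : A m = Set.univ

noncomputable def chainIndex (A : ℕ → Set S) (s : S) : ℕ := sInf {i | s ∈ A i}

/-- The function equal to `t i` on `A i \ A (i - 1)`. -/
noncomputable def chainFun (A : ℕ → Set S) (t : ℕ → ℝ) (s : S) : ℝ := t (chainIndex A s)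

namespace IsFiniteChain

variable {m : ℕ} {A : ℕ → Set S}

lemma mem_iff_chainIndex_le (hC : IsFiniteChain m A) (s : S) (i : ℕ) :
    s ∈ A i ↔ chainIndex A s ≤ i := by
  have hs : s ∈ A m := by simp [hC.top]
  exact ⟨fun h => Nat.sInf_le h, fun h => hC.mono h (Nat.sInf_mem (s := {i | s ∈ A i}) ⟨m, hs⟩)⟩

lemma chainIndex_mem_Icc (hC : IsFiniteChain m A) (s : S) : chainIndex A s ∈ Set.Icc 1 m := by
  refine ⟨Nat.one_le_iff_ne_zero.2 fun h => ?_, (hC.mem_iff_chainIndex_le s m).1 (by simp [hC.top])⟩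
  have := (hC.mem_iff_chainIndex_le s 0).2 h.le
  simp [hC.zero] at this

lemma chainIndex_eq (hC : IsFiniteChain m A) {s : S} {k : ℕ} (h : ∀ i, s ∈ A i ↔ k ≤ i) :
    chainIndex A s = k :=
  le_antisymm ((hC.mem_iff_chainIndex_le s k).1 ((h k).2 le_rfl))
    ((h _).1 ((hC.mem_iff_chainIndex_le s _).2 le_rfl))

lemma isSimpleFn_chainFun (hA : IsSetAlg 𝓐) (hC : IsFiniteChain m A) (hmem : ∀ i, A i ∈ 𝓐)
    (t : ℕ → ℝ) : IsSimpleFn 𝓐 (chainFun A t) := by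
  classical
  refine ⟨(Set.finite_Icc 1 m |>.image t).subset ?_, fun r => ?_⟩
  · rintro - ⟨s, rfl⟩
    exact ⟨_, hC.chainIndex_mem_Icc s, rfl⟩
  · have h : chainFun A t ⁻¹' {r} = ⋃ i ∈ (Finset.Icc 1 m).filter (t · = r), A i \ A (i - 1) := by
      ext s
      obtain ⟨hs1, hsm⟩ := hC.chainIndex_mem_Icc s
      simp only [Set.mem_preimage, Set.mem_singleton_iff, Set.mem_iUnion, Set.mem_sdiff,
        Finset.mem_filter, Finset.mem_Icc, hC.mem_iff_chainIndex_le, chainFun, exists_prop]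
      constructor
      · rintro rfl
        exact ⟨_, ⟨⟨hs1, hsm⟩, rfl⟩, le_rfl, by omega⟩
      · rintro ⟨i, ⟨hi, rfl⟩, h1, h2⟩
        rw [show chainIndex A s = i by omega]
    rw [h]
    exact hA.biUnion_mem _ fun i _ => hA.diff_mem (hmem i) (hmem _)

lemma setOf_le_chainFun (hC : IsFiniteChain m A) {t : ℕ → ℝ} (ht : AntitoneOn t (Set.Icc 1 m))
    (τ : ℝ) : ∃ j ≤ m, {s | τ ≤ chainFun A t s} = A j ∧
      (Finset.Icc 1 m).filter (τ ≤ t ·) = Finset.Icc 1 j := by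
  set j := Nat.findGreatest (τ ≤ t ·) m
  have hj : ∀ i ∈ Set.Icc 1 m, τ ≤ t i ↔ i ≤ j := by
    refine fun i hi => ⟨fun h => Nat.le_findGreatest hi.2 h, fun hij => ?_⟩
    have hj1 : j ≠ 0 := by have := hi.1; omega
    exact (Nat.findGreatest_of_ne_zero rfl hj1).trans
      (ht hi ⟨by omega, Nat.findGreatest_le m⟩ hij)
  refine ⟨j, Nat.findGreatest_le m, ?_, ?_⟩
  · ext s
    rw [Set.mem_ofPred_eq, hC.mem_iff_chainIndex_le, chainFun, hj _ (hC.chainIndex_mem_Icc s)]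
  · ext i
    simp only [Finset.mem_filter, Finset.mem_Icc]
    constructor
    · rintro ⟨hi, h⟩
      exact ⟨hi.1, (hj i hi).1 h⟩
    · rintro ⟨h1, h2⟩
      have hi : i ∈ Set.Icc 1 m := ⟨h1, h2.trans (Nat.findGreatest_le m)⟩
      exact ⟨hi, (hj i hi).2 h2⟩

theorem choquet_chainFun (hC : IsFiniteChain m A) {t : ℕ → ℝ} (ht : AntitoneOn t (Set.Icc 1 m))
    {ν : Set S → ℝ} (hν0 : ν ∅ = 0) (hν1 : ν Set.univ = 1) :
    choquet ν (chainFun A t) = ∑ i ∈ Finset.Icc 1 m, (ν (A i) - ν (A (i - 1))) * t i := by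
  refine choquet_eq_sum_of_setOf_le _ _ _ ?_ fun τ => ?_
  · rw [sum_Icc_sub_eq (fun i => ν (A i)), hC.top, hC.zero, hν0, hν1, sub_zero]
  · obtain ⟨j, -, hset, hfilter⟩ := hC.setOf_le_chainFun ht τ
    rw [hset, hfilter, sum_Icc_sub_eq (fun i => ν (A i)), hC.zero, hν0, sub_zero]

end IsFiniteChain

/-- The chain is that of the upper level sets of `φ`. -/
theorem IsSimpleFn.exists_chain [Nonempty S] (hA : IsSetAlg 𝓐) {φ : S → ℝ}
    (hφ : IsSimpleFn 𝓐 φ) : ∃ (m : ℕ) (A : ℕ → Set S) (t : ℕ → ℝ), IsFiniteChain m A ∧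
      (∀ i, A i ∈ 𝓐) ∧ (∀ i < m, A i ⊂ A (i + 1)) ∧ AntitoneOn t (Set.Icc 1 m) ∧
      chainFun A t = φ := by
  classical
  set R := hφ.1.toFinset
  set m := R.card
  obtain ⟨t, ht, himage⟩ := exists_strictAntiOn_image_Icc_eq R
  have hval : ∀ s, ∃ k ∈ Set.Icc 1 m, t k = φ s := fun s => by
    rw [← Set.mem_image, himage]; simp [R]
  set A : ℕ → Set S := fun i => if i = 0 then ∅ else {s | t (min i m) ≤ φ s}
  have hiff : ∀ s k, k ∈ Set.Icc 1 m → t k = φ s → ∀ i, s ∈ A i ↔ k ≤ i := by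
    intro s k hk hks i
    obtain ⟨hk1, hkm⟩ := hk
    rcases Nat.eq_zero_or_pos i with rfl | hi
    · simp only [A, if_pos, Set.mem_empty_iff_false, false_iff]; omega
    · simp only [A, if_neg hi.ne', Set.mem_ofPred_eq]
      rw [← hks, ht.le_iff_ge ⟨by omega, min_le_right i m⟩ ⟨hk1, hkm⟩]
      omega
  have hC : IsFiniteChain m A := by
    refine ⟨fun i j hij s hs => ?_, if_pos rfl, Set.eq_univ_of_forall fun s => ?_⟩
    · obtain ⟨k, hk, hks⟩ := hval s
      exact (hiff s k hk hks j).2 (((hiff s k hk hks i).1 hs).trans hij)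
    · obtain ⟨k, hk, hks⟩ := hval s
      exact (hiff s k hk hks m).2 hk.2
  refine ⟨m, A, t, hC, fun i => ?_, fun i hi => ?_, ht.antitoneOn, funext fun s => ?_⟩
  · rcases Nat.eq_zero_or_pos i with rfl | hi
    · simpa [A] using hA.empty_mem
    · simpa [A, hi.ne'] using hφ.setOf_le_mem hA _
  · obtain ⟨s, hs⟩ : t (i + 1) ∈ Set.range φ := by
      rw [← hφ.1.coe_toFinset, ← himage]; exact ⟨i + 1, ⟨by omega, by omega⟩, rfl⟩
    have hk := hiff s (i + 1) ⟨by omega, by omega⟩ hs.symm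
    exact ssubset_of_subset_not_subset (hC.mono (Nat.le_succ i))
      fun h => by simpa using (hk i).1 (h ((hk (i + 1)).2 le_rfl))
  · obtain ⟨k, hk, hks⟩ := hval s
    rw [chainFun, hC.chainIndex_eq (hiff s k hk hks), hks]

lemma IsFiniteChain.of_subset_succ {n : ℕ} {A : ℕ → Set S} (h0 : A 0 = ∅)
    (hn : A n = Set.univ) (hsucc : ∀ i < n, A i ⊆ A (i + 1)) :
    IsFiniteChain n (fun i => A (min i n)) := by
  refine ⟨monotone_nat_of_le_succ fun i => ?_, by simpa using h0, by simpa using hn⟩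
  rcases lt_or_ge i n with h | h
  · rw [min_eq_left h.le, min_eq_left (Nat.succ_le_of_lt h)]; exact hsucc i h
  · rw [min_eq_right h, min_eq_right (h.trans (Nat.le_succ i))]

/-- The witness is the comonotone sum `∑ i, w i • 1_{A i}`, i.e. `chainFun A` of the tail sums
of `w`. -/
theorem IsFiniteChain.exists_choquet_eq_sum (hA : IsSetAlg 𝓐) {n : ℕ} {A : ℕ → Set S}
    (hC : IsFiniteChain n A) (hmem : ∀ i, A i ∈ 𝓐) {w : ℕ → ℝ} (hw : ∀ i, 0 ≤ w i) :
    ∃ φ, IsSimpleFn 𝓐 φ ∧ (∀ s, φ s ∈ Set.Icc 0 (∑ i ∈ Finset.Icc 1 n, w i)) ∧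
      ∀ ν : Set S → ℝ, ν ∅ = 0 → ν Set.univ = 1 →
        choquet ν φ = ∑ i ∈ Finset.Icc 1 n, w i * ν (A i) := by
  set t : ℕ → ℝ := fun k => ∑ i ∈ Finset.Icc k n, w i
  have ht : Antitone t := fun k l hkl =>
    Finset.sum_le_sum_of_subset_of_nonneg (Finset.Icc_subset_Icc_left hkl) fun i _ _ => hw i
  refine ⟨chainFun A t, hC.isSimpleFn_chainFun hA hmem t, fun s =>
    ⟨Finset.sum_nonneg fun i _ => hw i, ht (hC.chainIndex_mem_Icc s).1⟩, fun ν hν0 hν1 => ?_⟩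
  rw [hC.choquet_chainFun (ht.antitoneOn _) hν0 hν1, sum_Icc_sub_mul_eq (fun i => ν (A i)),
    hC.zero, hν0]
  simp only [t, Finset.Icc_eq_empty_of_lt (Nat.lt_succ_self n), Finset.sum_empty, zero_mul,
    mul_zero, sub_zero, zero_add]
  refine Finset.sum_congr rfl fun k hk => ?_
  rw [← Finset.insert_Icc_add_one_left_eq_Icc (Finset.mem_Icc.1 hk).2,
    Finset.sum_insert (by simp), add_sub_cancel_right]

end Chain

section Separation

variable {ι : Type*} [Fintype ι]

/-- The separating functional is nonnegative because the orthant is unbounded below in every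
coordinate. -/
lemma exists_nonneg_separating_of_disjoint_Iic {K : Set (ι → ℝ)} (hKc : Convex ℝ K)
    (hK : IsCompact K) {d : ι → ℝ} (hd : Disjoint K (Set.Iic d)) :
    ∃ μ : ι → ℝ, 0 ≤ μ ∧ ∃ b, ∑ i, μ i * d i < b ∧ ∀ x ∈ K, b < ∑ i, μ i * x i := by
  classical
  obtain ⟨g, u, v, hgK, huv, hgd⟩ :=
    geometric_hahn_banach_compact_closed hKc hK (convex_Iic d) isClosed_Iic hd
  set e : ι → ι → ℝ := fun i j => if i = j then 1 else 0
  have hg : ∀ x, -g x = ∑ i, -g (e i) * x i := fun x => by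
    have := (g : (ι → ℝ) →ₗ[ℝ] ℝ).pi_apply_eq_sum_univ x
    rw [ContinuousLinearMap.coe_coe] at this
    rw [this, ← Finset.sum_neg_distrib]
    simp [e, mul_comm]
  refine ⟨fun i => -g (e i), fun i => ?_, -u, ?_, fun x hx => ?_⟩
  · by_contra! hpos
    have hvd := hgd d (Set.mem_Iic.2 le_rfl)
    have hr : 0 ≤ (g d - v) / g (e i) := div_nonneg (by linarith) (by simpa using hpos.le)
    have hmem : d - ((g d - v) / g (e i)) • e i ∈ Set.Iic d := fun j => by
      by_cases h : i = j
      · subst h; simpa [e] using hr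
      · simp [e, h]
    have := hgd _ hmem
    rw [map_sub, map_smul, smul_eq_mul, div_mul_cancel₀ _ (by simpa using hpos.ne)] at this
    linarith
  · rw [← hg]; linarith [hgd d (Set.mem_Iic.2 le_rfl)]
  · rw [← hg]; linarith [hgK x hx]

lemma exists_nonneg_separating_of_disjoint_Ici {K : Set (ι → ℝ)} (hKc : Convex ℝ K)
    (hK : IsCompact K) {d : ι → ℝ} (hd : Disjoint K (Set.Ici d)) :
    ∃ μ : ι → ℝ, 0 ≤ μ ∧ ∃ b, (∀ x ∈ K, ∑ i, μ i * x i < b) ∧ b < ∑ i, μ i * d i := by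
  have hd' : Disjoint (-K) (Set.Iic (-d)) := Set.disjoint_left.2 fun x hx hxd =>
    Set.disjoint_left.1 hd hx (show d ≤ -x from le_neg.1 hxd)
  obtain ⟨μ, hμ, b, hdb, hbK⟩ := exists_nonneg_separating_of_disjoint_Iic hKc.neg hK.neg hd'
  refine ⟨μ, hμ, -b, fun x hx => ?_, ?_⟩
  · have := hbK (-x) (by simpa using hx)
    simp only [Pi.neg_apply, mul_neg, Finset.sum_neg_distrib] at this
    linarith
  · simp only [Pi.neg_apply, mul_neg, Finset.sum_neg_distrib] at hdb
    linarith

end Separation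

section WeakStar

variable {𝓐 : Set (Set S)}

lemma fint_eq_sum_of_range_subset {p : Set S → ℝ} (hp0 : p ∅ = 0) {ψ : S → ℝ}
    (hψ : (Set.range ψ).Finite) {F : Finset ℝ} (hF : Set.range ψ ⊆ F) :
    fint p ψ = ∑ r ∈ F, r * p (ψ ⁻¹' {r}) := by
  classical
  rw [fint, dif_pos hψ]
  refine Finset.sum_subset (by simpa using hF) fun r _ hr => ?_
  rw [Set.preimage_singleton_eq_empty.2 (by simpa using hr), hp0, mul_zero]

lemma isSimpleFn_indicator_one (hA : IsSetAlg 𝓐) {B : Set S} (hB : B ∈ 𝓐) :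
    IsSimpleFn 𝓐 (B.indicator 1) := by
  refine ⟨(Set.toFinite {0, 1}).subset ?_, fun r => ?_⟩
  · rintro _ ⟨s, rfl⟩
    by_cases h : s ∈ B <;> simp [h]
  · rcases Set.indicator_one_preimage B {r} with h | h | h | h <;> rw [h]
    exacts [hA.univ_mem, hB, hA.compl_mem B hB, hA.empty_mem]

lemma fint_indicator_one (hA : IsSetAlg 𝓐) {p : Set S → ℝ} (hp : p ∈ Δset 𝓐) {B : Set S}
    (hB : B ∈ 𝓐) : fint p (B.indicator 1) = p B := by
  rw [fint_eq_sum_of_range_subset (Δset.apply_empty hA hp) (isSimpleFn_indicator_one hA hB).1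
    (F := {0, 1}) ?_, Finset.sum_pair zero_ne_one, zero_mul, zero_add, one_mul]
  · congr 1
    ext s
    by_cases h : s ∈ B <;> simp [h]
  · rintro _ ⟨s, rfl⟩
    by_cases h : s ∈ B <;> simp [h]

lemma continuous_fint {ψ : S → ℝ} (hψ : IsSimpleFn 𝓐 ψ) :
    @Continuous _ _ (weakStar 𝓐) _ (fun p => fint p ψ) := by
  let _ := weakStar 𝓐
  show Continuous ((fun F : {φ // IsSimpleFn 𝓐 φ} → ℝ => F ⟨ψ, hψ⟩) ∘ fun p φ => fint p φ.1)
  exact (continuous_apply _).comp continuous_induced_dom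

lemma continuousOn_apply_Δset (hA : IsSetAlg 𝓐) {B : Set S} (hB : B ∈ 𝓐) :
    @ContinuousOn _ _ (weakStar 𝓐) _ (fun p => p B) (Δset 𝓐) := by
  let _ := weakStar 𝓐
  exact (continuous_fint (isSimpleFn_indicator_one hA hB)).continuousOn.congr
    fun p hp => (fint_indicator_one hA hp hB).symm

lemma isCompact_image_apply {ι : Type*} (hA : IsSetAlg 𝓐) {P : Set (Set S → ℝ)}
    (hP : P ⊆ Δset 𝓐) (hPk : @IsCompact _ (weakStar 𝓐) P) {B : ι → Set S}
    (hB : ∀ i, B i ∈ 𝓐) : IsCompact ((fun p i => p (B i)) '' P) := by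
  let _ := weakStar 𝓐
  exact hPk.image_of_continuousOn
    (continuousOn_pi.2 fun i => (continuousOn_apply_Δset hA (hB i)).mono hP)

lemma convex_image_apply {ι : Type*} {P : Set (Set S → ℝ)} (hPc : Convex ℝ P) (B : ι → Set S) :
    Convex ℝ ((fun p i => p (B i)) '' P) :=
  hPc.linear_image (LinearMap.pi fun i => LinearMap.proj (B i))

end WeakStar

section Priors

variable {𝓐 : Set (Set S)}

lemma exists_simpleFn_choquet_eq_mul_sum (hA : IsSetAlg 𝓐) {n : ℕ} {A : ℕ → Set S}
    (h0 : A 0 = ∅) (hn : A n = Set.univ) (hmem : ∀ i ≤ n, A i ∈ 𝓐)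
    (hsucc : ∀ i < n, A i ⊆ A (i + 1)) {μ : Finset.Icc 1 n → ℝ} (hμ : 0 ≤ μ) {δ : ℝ}
    (hδ : 0 < δ) : ∃ (φ : S → ℝ) (c : ℝ), IsSimpleFn 𝓐 φ ∧ (∀ s, φ s ∈ Set.Ico 0 δ) ∧ 0 < c ∧
      ∀ ν : Set S → ℝ, ν ∅ = 0 → ν Set.univ = 1 → choquet ν φ = c * ∑ i, μ i * ν (A i) := by
  set M := ∑ i, μ i
  have hM : 0 ≤ M := Finset.sum_nonneg fun i _ => hμ i
  set c := δ / (M + 1)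
  have hc : 0 < c := div_pos hδ (by linarith)
  set w : ℕ → ℝ := fun k => if h : k ∈ Finset.Icc 1 n then c * μ ⟨k, h⟩ else 0
  have hw : ∀ g : ℕ → ℝ, ∑ k ∈ Finset.Icc 1 n, w k * g k = c * ∑ i, μ i * g i := fun g => by
    rw [Finset.mul_sum, ← Finset.sum_coe_sort (Finset.Icc 1 n)]
    exact Finset.sum_congr rfl fun i _ => by simp only [w, dif_pos i.2, mul_assoc]
  have hw0 : ∀ k, 0 ≤ w k := fun k => by
    by_cases h : k ∈ Finset.Icc 1 n
    · simpa only [w, dif_pos h] using mul_nonneg hc.le (hμ _)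
    · simp only [w, dif_neg h, le_refl]
  obtain ⟨φ, hφ, hrange, hchoq⟩ := (IsFiniteChain.of_subset_succ h0 hn hsucc).exists_choquet_eq_sum
    hA (fun i => hmem _ (min_le_right i n)) hw0
  refine ⟨φ, c, hφ, fun s => ⟨(hrange s).1, (hrange s).2.trans_lt ?_⟩, hc, fun ν hν0 hν1 => ?_⟩
  · have hsum := hw fun _ => 1
    simp only [mul_one] at hsum
    rw [hsum, div_mul_eq_mul_div, div_lt_iff₀ (by linarith)]
    nlinarith
  · rw [hchoq ν hν0 hν1, hw fun k => ν (A (min k n))]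
    congr 2 with i
    rw [min_eq_left (Finset.mem_Icc.1 i.2).2]

theorem exists_mem_le_of_minPVal_le_choquet (hA : IsSetAlg 𝓐) {P : Set (Set S → ℝ)}
    (hP : P ⊆ Δset 𝓐) (hPc : Convex ℝ P) (hPk : @IsCompact _ (weakStar 𝓐) P)
    {π : Set S → ℝ} (hπ0 : π ∅ = 0) (hπ1 : π Set.univ = 1) {δ : ℝ} (hδ : 0 < δ)
    (hle : ∀ φ, IsSimpleFn 𝓐 φ → (∀ s, φ s ∈ Set.Ico 0 δ) → minPVal P φ ≤ choquet π φ)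
    {n : ℕ} {A : ℕ → Set S} (h0 : A 0 = ∅) (hn : A n = Set.univ) (hmem : ∀ i ≤ n, A i ∈ 𝓐)
    (hsucc : ∀ i < n, A i ⊆ A (i + 1)) :
    (P ∩ {p | p ∈ Δset 𝓐 ∧ ∀ i, 1 ≤ i → i ≤ n → p (A i) ≤ π (A i)}).Nonempty := by
  by_contra hempty
  set B : Finset.Icc 1 n → Set S := fun i => A i
  have hB : ∀ i, B i ∈ 𝓐 := fun i => hmem _ (Finset.mem_Icc.1 i.2).2
  obtain ⟨μ, hμ, b, hπb, hbP⟩ := exists_nonneg_separating_of_disjoint_Iic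
    (convex_image_apply hPc B) (isCompact_image_apply hA hP hPk hB) (d := fun i => π (B i)) <|
    Set.disjoint_left.2 <| by
      rintro _ ⟨p, hp, rfl⟩ hpπ
      exact hempty ⟨p, hp, hP hp, fun i h1 h2 => hpπ ⟨i, Finset.mem_Icc.2 ⟨h1, h2⟩⟩⟩
  obtain ⟨φ, c, hφ, hrange, hc, hchoq⟩ :=
    exists_simpleFn_choquet_eq_mul_sum hA h0 hn hmem hsucc hμ hδ
  have hlow : ((c * b : ℝ) : EReal) ≤ minPVal P φ := le_iInf₂ fun p hp => by
    rw [fint_eq_choquet hA (hP hp) hφ, hchoq p (Δset.apply_empty hA (hP hp)) (hP hp).1]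
    exact EReal.coe_le_coe ((mul_lt_mul_of_pos_left (hbP _ ⟨p, hp, rfl⟩) hc).le)
  have := hlow.trans (hle φ hφ hrange)
  rw [hchoq π hπ0 hπ1, EReal.coe_le_coe_iff] at this
  linarith [mul_lt_mul_of_pos_left hπb hc]

theorem exists_mem_ge_of_choquet_le_maxQVal (hA : IsSetAlg 𝓐) {Q : Set (Set S → ℝ)}
    (hQ : Q ⊆ Δset 𝓐) (hQc : Convex ℝ Q) (hQk : @IsCompact _ (weakStar 𝓐) Q)
    {π : Set S → ℝ} (hπ0 : π ∅ = 0) (hπ1 : π Set.univ = 1) {δ : ℝ} (hδ : 0 < δ)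
    (hle : ∀ φ, IsSimpleFn 𝓐 φ → (∀ s, φ s ∈ Set.Ico 0 δ) → choquet π φ ≤ maxQVal Q φ)
    {n : ℕ} {A : ℕ → Set S} (h0 : A 0 = ∅) (hn : A n = Set.univ) (hmem : ∀ i ≤ n, A i ∈ 𝓐)
    (hsucc : ∀ i < n, A i ⊆ A (i + 1)) :
    (Q ∩ {q | q ∈ Δset 𝓐 ∧ ∀ i, 1 ≤ i → i ≤ n → π (A i) ≤ q (A i)}).Nonempty := by
  by_contra hempty
  set B : Finset.Icc 1 n → Set S := fun i => A i
  have hB : ∀ i, B i ∈ 𝓐 := fun i => hmem _ (Finset.mem_Icc.1 i.2).2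
  obtain ⟨μ, hμ, b, hbQ, hπb⟩ := exists_nonneg_separating_of_disjoint_Ici
    (convex_image_apply hQc B) (isCompact_image_apply hA hQ hQk hB) (d := fun i => π (B i)) <|
    Set.disjoint_left.2 <| by
      rintro _ ⟨q, hq, rfl⟩ hqπ
      exact hempty ⟨q, hq, hQ hq, fun i h1 h2 => hqπ ⟨i, Finset.mem_Icc.2 ⟨h1, h2⟩⟩⟩
  obtain ⟨φ, c, hφ, hrange, hc, hchoq⟩ :=
    exists_simpleFn_choquet_eq_mul_sum hA h0 hn hmem hsucc hμ hδ
  have hup : maxQVal Q φ ≤ ((c * b : ℝ) : EReal) := iSup₂_le fun q hq => by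
    rw [fint_eq_choquet hA (hQ hq) hφ, hchoq q (Δset.apply_empty hA (hQ hq)) (hQ hq).1]
    exact EReal.coe_le_coe ((mul_lt_mul_of_pos_left (hbQ _ ⟨q, hq, rfl⟩) hc).le)
  have := (hle φ hφ hrange).trans hup
  rw [hchoq π hπ0 hπ1, EReal.coe_le_coe_iff] at this
  linarith [mul_lt_mul_of_pos_left hπb hc]

theorem minPVal_le_choquet_of_forall_chain [Nonempty S] (hA : IsSetAlg 𝓐)
    {P : Set (Set S → ℝ)} {π : Set S → ℝ} (hπ0 : π ∅ = 0) (hπ1 : π Set.univ = 1)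
    (hchain : ∀ (n : ℕ) (A : ℕ → Set S), A 0 = ∅ → A n = Set.univ →
      (∀ i ≤ n, A i ∈ 𝓐) → (∀ i < n, A i ⊂ A (i + 1)) →
      (P ∩ {p | p ∈ Δset 𝓐 ∧ ∀ i, 1 ≤ i → i ≤ n → p (A i) ≤ π (A i)}).Nonempty)
    {φ : S → ℝ} (hφ : IsSimpleFn 𝓐 φ) : minPVal P φ ≤ choquet π φ := by
  obtain ⟨m, A, t, hC, hmem, hstrict, ht, rfl⟩ := hφ.exists_chain hA
  obtain ⟨p, hpP, hpΔ, hpπ⟩ := hchain m A hC.zero hC.top (fun i _ => hmem i) hstrict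
  have hp0 := Δset.apply_empty hA hpΔ
  refine (iInf₂_le p hpP).trans (EReal.coe_le_coe_iff.2 ?_)
  rw [fint_eq_choquet hA hpΔ hφ, hC.choquet_chainFun ht hp0 hpΔ.1,
    hC.choquet_chainFun ht hπ0 hπ1]
  exact sum_Icc_sub_mul_le ht (by simp [hC.zero, hp0, hπ0]) (by simp [hC.top, hpΔ.1, hπ1])
    fun k hk => hpπ k (Finset.mem_Icc.1 hk).1 (Finset.mem_Icc.1 hk).2

theorem choquet_le_maxQVal_of_forall_chain [Nonempty S] (hA : IsSetAlg 𝓐)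
    {Q : Set (Set S → ℝ)} {π : Set S → ℝ} (hπ0 : π ∅ = 0) (hπ1 : π Set.univ = 1)
    (hchain : ∀ (n : ℕ) (A : ℕ → Set S), A 0 = ∅ → A n = Set.univ →
      (∀ i ≤ n, A i ∈ 𝓐) → (∀ i < n, A i ⊂ A (i + 1)) →
      (Q ∩ {q | q ∈ Δset 𝓐 ∧ ∀ i, 1 ≤ i → i ≤ n → π (A i) ≤ q (A i)}).Nonempty)
    {φ : S → ℝ} (hφ : IsSimpleFn 𝓐 φ) : choquet π φ ≤ maxQVal Q φ := by
  obtain ⟨m, A, t, hC, hmem, hstrict, ht, rfl⟩ := hφ.exists_chain hA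
  obtain ⟨q, hqQ, hqΔ, hqπ⟩ := hchain m A hC.zero hC.top (fun i _ => hmem i) hstrict
  have hq0 := Δset.apply_empty hA hqΔ
  refine (EReal.coe_le_coe_iff.2 ?_).trans
    (le_iSup₂ (f := fun q (_ : q ∈ Q) => (fint q (chainFun A t) : EReal)) q hqQ)
  rw [fint_eq_choquet hA hqΔ hφ, hC.choquet_chainFun ht hq0 hqΔ.1,
    hC.choquet_chainFun ht hπ0 hπ1]
  exact sum_Icc_sub_mul_le ht (by simp [hC.zero, hq0, hπ0]) (by simp [hC.top, hqΔ.1, hπ1])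
    fun k hk => hqπ k (Finset.mem_Icc.1 hk).1 (Finset.mem_Icc.1 hk).2

end Priors

section Acts

variable {V : Type*} {𝓐 : Set (Set S)} {X : Set V} {u : V → ℝ}

lemma isSimpleFn_uAct (hA : IsSetAlg 𝓐) {f : S → V} (hf : f ∈ Acts 𝓐 X) :
    IsSimpleFn 𝓐 (uAct u f) :=
  ⟨Set.range_comp u f ▸ hf.2.1.image u, hA.preimage_comp_mem hf.2.1 hf.2.2 u⟩

lemma exists_act_uAct_eq [Nonempty V] (hA : IsSetAlg 𝓐) {φ : S → ℝ} (hφ : IsSimpleFn 𝓐 φ)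
    (hφX : ∀ s, φ s ∈ u '' X) : ∃ f ∈ Acts 𝓐 X, uAct u f = φ :=
  ⟨Function.invFunOn u X ∘ φ,
    ⟨fun s => Function.invFunOn_mem (hφX s), Set.range_comp _ φ ▸ hφ.1.image _,
      hA.preimage_comp_mem hφ.1 hφ.2 _⟩,
    funext fun s => Function.invFunOn_eq (hφX s)⟩

lemma choquet_const [Nonempty S] {π : Set S → ℝ} (hπ0 : π ∅ = 0) (hπ1 : π Set.univ = 1)
    (c : ℝ) : choquet π (fun _ : S => c) = c := by
  rw [choquet_eq_sum_of_setOf_le (Finset.univ : Finset Unit) (fun _ => 1) (fun _ => c)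
    (by simp) fun τ => ?_]
  · simp
  · by_cases h : τ ≤ c <;> simp [h, hπ0, hπ1]

lemma constAct_mem_Acts (hA : IsSetAlg 𝓐) {x : V} (hx : x ∈ X) : constAct x ∈ Acts 𝓐 X :=
  ⟨fun _ => hx, (Set.finite_singleton x).subset Set.range_const_subset, fun v => by
    classical
    rw [show constAct x = fun _ : S => x from rfl, Set.preimage_const]
    split_ifs
    exacts [hA.univ_mem, hA.empty_mem]⟩

lemma uAct_eq_choquet_of_isCE [Nonempty S] (hA : IsSetAlg 𝓐) {π : Set S → ℝ} (hπ0 : π ∅ = 0)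
    (hπ1 : π Set.univ = 1) {R : (S → V) → (S → V) → Prop}
    (hrep : ∀ f ∈ Acts 𝓐 X, ∀ g ∈ Acts 𝓐 X,
      (R f g ↔ choquet π (uAct u g) ≤ choquet π (uAct u f)))
    {xf : (S → V) → V} (hxf : IsCE 𝓐 X R xf) {f : S → V} (hf : f ∈ Acts 𝓐 X) :
    u (xf f) = choquet π (uAct u f) := by
  obtain ⟨hxX, hfx, hxf'⟩ := hxf f hf
  have hconst := constAct_mem_Acts (S := S) hA hxX
  have hc : choquet π (uAct u (constAct (xf f))) = u (xf f) := choquet_const hπ0 hπ1 (u (xf f))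
  have h1 := (hrep f hf _ hconst).1 hfx
  have h2 := (hrep _ hconst f hf).1 hxf'
  rw [hc] at h1 h2
  exact le_antisymm h1 h2

end Acts

theorem stmt16_general {S V : Type*} [Nonempty S] [AddCommGroup V] [Module ℝ V]
    (𝓐 : Set (Set S)) (hA : IsSetAlg 𝓐)
    (X : Set V)
    (π : Set S → ℝ) (hπ : IsCapacity 𝓐 π)
    (R : (S → V) → (S → V) → Prop)
    (u : V → ℝ) (h0 : (0 : ℝ) ∈ interior (u '' X))
    (hrep : ∀ f ∈ Acts 𝓐 X, ∀ g ∈ Acts 𝓐 X,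
      (R f g ↔ choquet π (uAct u g) ≤ choquet π (uAct u f)))
    (xf : (S → V) → V) (hxf : IsCE 𝓐 X R xf) :
    (∀ P : Set (Set S → ℝ), P ⊆ Δset 𝓐 → P.Nonempty → Convex ℝ P →
      (@IsCompact _ (weakStar 𝓐) P) →
      (P ∈ PstarOf 𝓐 X u xf ↔
        ∀ (n : ℕ) (A : ℕ → Set S), A 0 = ∅ → A n = Set.univ →
          (∀ i ≤ n, A i ∈ 𝓐) → (∀ i < n, A i ⊂ A (i + 1)) →
          (P ∩ {p | p ∈ Δset 𝓐 ∧ ∀ i, 1 ≤ i → i ≤ n → p (A i) ≤ π (A i)}).Nonempty)) ∧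
    (∀ Q : Set (Set S → ℝ), Q ⊆ Δset 𝓐 → Q.Nonempty → Convex ℝ Q →
      (@IsCompact _ (weakStar 𝓐) Q) →
      (Q ∈ QstarOf 𝓐 X u xf ↔
        ∀ (n : ℕ) (A : ℕ → Set S), A 0 = ∅ → A n = Set.univ →
          (∀ i ≤ n, A i ∈ 𝓐) → (∀ i < n, A i ⊂ A (i + 1)) →
          (Q ∩ {q | q ∈ Δset 𝓐 ∧ ∀ i, 1 ≤ i → i ≤ n → π (A i) ≤ q (A i)}).Nonempty)) := by
  obtain ⟨hπ0, hπ1, -⟩ := hπ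
  obtain ⟨δ, hδ, hball⟩ := Metric.mem_nhds_iff.1 (mem_interior_iff_mem_nhds.1 h0)
  have hact : ∀ φ, IsSimpleFn 𝓐 φ → (∀ s, φ s ∈ Set.Ico 0 δ) → ∃ f ∈ Acts 𝓐 X, uAct u f = φ :=
    fun φ hφ hφδ => exists_act_uAct_eq hA hφ fun s => hball <| by
      simpa [abs_of_nonneg (hφδ s).1] using (hφδ s).2
  have hce := fun f (hf : f ∈ Acts 𝓐 X) => uAct_eq_choquet_of_isCE hA hπ0 hπ1 hrep hxf hf
  refine ⟨fun P hP hPne hPc hPk => ⟨fun hPstar n A hA0 hAn hmem hchain => ?_, fun hchain => ?_⟩,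
    fun Q hQ hQne hQc hQk => ⟨fun hQstar n A hA0 hAn hmem hchain => ?_, fun hchain => ?_⟩⟩
  · refine exists_mem_le_of_minPVal_le_choquet hA hP hPc hPk hπ0 hπ1 hδ (fun φ hφ hφδ => ?_)
      hA0 hAn hmem fun i hi => (hchain i hi).subset
    obtain ⟨f, hf, rfl⟩ := hact φ hφ hφδ
    exact hce f hf ▸ hPstar.2.2.2.2 f hf
  · exact ⟨hP, hPne, hPc, hPk, fun f hf => (hce f hf).symm ▸
      minPVal_le_choquet_of_forall_chain hA hπ0 hπ1 hchain (isSimpleFn_uAct hA hf)⟩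
  · refine exists_mem_ge_of_choquet_le_maxQVal hA hQ hQc hQk hπ0 hπ1 hδ (fun φ hφ hφδ => ?_)
      hA0 hAn hmem fun i hi => (hchain i hi).subset
    obtain ⟨f, hf, rfl⟩ := hact φ hφ hφδ
    exact hce f hf ▸ hQstar.2.2.2.2 f hf
  · exact ⟨hQ, hQne, hQc, hQk, fun f hf => (hce f hf).symm ▸
      choquet_le_maxQVal_of_forall_chain hA hπ0 hπ1 hchain (isSimpleFn_uAct hA hf)⟩

theorem stmt16 {S V : Type*} [Nonempty S] [AddCommGroup V] [Module ℝ V]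
    (𝓐 : Set (Set S)) (hA : IsSetAlg 𝓐)
    (X : Set V) (hX : X.Nonempty) (hXc : Convex ℝ X)
    (π : Set S → ℝ) (hπ : IsCapacity 𝓐 π)
    (R : (S → V) → (S → V) → Prop) (hpref : IBPref 𝓐 X R)
    (u : V → ℝ) (hu : IsNonconstAffine X u) (h0 : (0 : ℝ) ∈ interior (u '' X))
    (hrep : ∀ f ∈ Acts 𝓐 X, ∀ g ∈ Acts 𝓐 X,
      (R f g ↔ choquet π (uAct u g) ≤ choquet π (uAct u f)))
    (xf : (S → V) → V) (hxf : IsCE 𝓐 X R xf) :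
    (∀ P : Set (Set S → ℝ), P ⊆ Δset 𝓐 → P.Nonempty → Convex ℝ P →
      (@IsCompact _ (weakStar 𝓐) P) →
      (P ∈ PstarOf 𝓐 X u xf ↔
        ∀ (n : ℕ) (A : ℕ → Set S), A 0 = ∅ → A n = Set.univ →
          (∀ i ≤ n, A i ∈ 𝓐) → (∀ i < n, A i ⊂ A (i + 1)) →
          (P ∩ {p | p ∈ Δset 𝓐 ∧ ∀ i, 1 ≤ i → i ≤ n → p (A i) ≤ π (A i)}).Nonempty)) ∧
    (∀ Q : Set (Set S → ℝ), Q ⊆ Δset 𝓐 → Q.Nonempty → Convex ℝ Q →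
      (@IsCompact _ (weakStar 𝓐) Q) →
      (Q ∈ QstarOf 𝓐 X u xf ↔
        ∀ (n : ℕ) (A : ℕ → Set S), A 0 = ∅ → A n = Set.univ →
          (∀ i ≤ n, A i ∈ 𝓐) → (∀ i < n, A i ⊂ A (i + 1)) →
          (Q ∩ {q | q ∈ Δset 𝓐 ∧ ∀ i, 1 ≤ i → i ≤ n → π (A i) ≤ q (A i)}).Nonempty)) :=
  stmt16_general 𝓐 hA X π hπ R u h0 hrep xf hxf

end Paper
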